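/- arXiv:1103.2488 — 4 statements merged into one kernel-verified Lean document; each statement's English description precedes it below -/
import Mathlib

section
/- Let D, P be natural numbers, let σ_1, …, σ_P : Fin D → Fin D be maps satisfying σ_m(k) ≠ k for all m and k, and let a : Fin D → ℝ be coefficients such that ∑_{k=1}^{D} a_k · x_k · ∏_{m=1}^{P} x_{σ_m(k)} = 0 for every x ∈ ℝ^D. Then the vector field F with components F_k(x) = a_k · (∏_{m=1}^{P} x_{σ_m(k)}) / ‖x‖^D has vanishing divergence at every x ≠ 0: ∑_{k=1}^{D} ∂F_k/∂x_k (x) = 0. -/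
open scoped RealInnerProductSpace

/-!
Write `F = φ • G` with the radial factor `φ y = ‖y‖⁻ᴰ` and `G_k y = a_k ∏ₘ y_{σₘ(k)}`.
Since no `σₘ(k)` equals `k`, the component `G_k` does not depend on `y_k`, so `∂ₖ G_k = 0` and
the product rule leaves `div F = ⟪∇φ, G⟫`. The gradient of a radial function is a multiple of
`x`, and `⟪x, G x⟫ = ∑ₖ a_k x_k ∏ₘ x_{σₘ(k)}` vanishes by hypothesis.
-/

theorem fderiv_apply_eq_zero_of_forall_add_smul_eq {𝕜 E F : Type*} [NontriviallyNormedField 𝕜]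
    [NormedAddCommGroup E] [NormedSpace 𝕜 E] [NormedAddCommGroup F] [NormedSpace 𝕜 F]
    {f : E → F} {x v : E} (hf : DifferentiableAt 𝕜 f x) (hv : ∀ t : 𝕜, f (x + t • v) = f x) :
    fderiv 𝕜 f x v = 0 := by
  have hline : HasDerivAt (fun t : 𝕜 => f (x + t • v)) (fderiv 𝕜 f x v) 0 := by
    have hpath : HasDerivAt (fun t : 𝕜 => x + t • v) v 0 := by
      simpa using ((hasDerivAt_id (0 : 𝕜)).smul_const v).const_add x
    have hf' : HasFDerivAt f (fderiv 𝕜 f x) (x + (0 : 𝕜) • v) := by simpa using hf.hasFDerivAt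
    exact hf'.comp_hasDerivAt (0 : 𝕜) hpath
  simp only [hv] at hline
  exact hline.unique (hasDerivAt_const 0 (f x))

theorem fderiv_euclidean_apply {𝕜 ι H : Type*} [RCLike 𝕜] [Fintype ι] [NormedAddCommGroup H]
    [NormedSpace 𝕜 H] {f : H → EuclideanSpace 𝕜 ι} {y : H} (hf : DifferentiableAt 𝕜 f y)
    (i : ι) (v : H) :
    fderiv 𝕜 (fun x => f x i) y v = fderiv 𝕜 f y v i :=
  congrArg (· v) ((EuclideanSpace.proj i).hasFDerivAt.comp y hf.hasFDerivAt).fderiv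

theorem hasFDerivAt_norm_of_ne_zero {E : Type*} [NormedAddCommGroup E] [InnerProductSpace ℝ E]
    {x : E} (hx : x ≠ 0) : HasFDerivAt (fun y : E => ‖y‖) (‖x‖⁻¹ • innerSL ℝ x) x := by
  have hsqrt := (hasStrictFDerivAt_norm_sq x).hasFDerivAt.sqrt (by positivity)
  simp only [Real.sqrt_sq (norm_nonneg _)] at hsqrt
  refine hsqrt.congr_fderiv ?_
  ext y
  simp only [smul_apply, coe_innerSL_apply, nsmul_eq_mul, Nat.cast_ofNat, smul_eq_mul]
  field_simp

theorem HasDerivAt.hasFDerivAt_comp_norm {E : Type*} [NormedAddCommGroup E]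
    [InnerProductSpace ℝ E] {f : ℝ → ℝ} {f' : ℝ} {x : E} (hf : HasDerivAt f f' ‖x‖)
    (hx : x ≠ 0) :
    HasFDerivAt (fun y => f ‖y‖) ((f' / ‖x‖) • innerSL ℝ x) x :=
  (hf.comp_hasFDerivAt x (hasFDerivAt_norm_of_ne_zero hx)).congr_fderiv
    (by rw [smul_smul, div_eq_mul_inv])

/-- If `σ_1, …, σ_P : Fin D → Fin D` avoid fixed points and the coefficients `a_k` satisfy
`∑ k, a_k · x_k · ∏ m, x_{σ_m(k)} = 0` for all `x`, then the vector field with components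
`F_k(x) = a_k · (∏ m, x_{σ_m(k)}) / ‖x‖^D` is divergence-free away from the origin. -/
theorem divergence_of_generalized_field_vanishes
    (D P : ℕ) (σ : Fin P → Fin D → Fin D)
    (hσ : ∀ m : Fin P, ∀ k : Fin D, σ m k ≠ k)
    (a : Fin D → ℝ)
    (ha : ∀ x : EuclideanSpace ℝ (Fin D),
      ∑ k : Fin D, a k * x k * ∏ m : Fin P, x (σ m k) = 0)
    (F : EuclideanSpace ℝ (Fin D) → EuclideanSpace ℝ (Fin D))
    (hF : ∀ x : EuclideanSpace ℝ (Fin D), ∀ k : Fin D,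
      F x k = a k * (∏ m : Fin P, x (σ m k)) / ‖x‖ ^ D) :
    ∀ x : EuclideanSpace ℝ (Fin D), x ≠ 0 →
      DifferentiableAt ℝ F x ∧
        ∑ k : Fin D,
          ⟪(fderiv ℝ F x) (EuclideanSpace.single k (1 : ℝ)),
            EuclideanSpace.single k (1 : ℝ)⟫ = 0 := by
  intro x hx
  set φ : EuclideanSpace ℝ (Fin D) → ℝ := fun y => (‖y‖ ^ D)⁻¹
  set G : Fin D → EuclideanSpace ℝ (Fin D) → ℝ := fun k y => a k * ∏ m, y (σ m k)
  have hFG : ∀ k, (fun y => F y k) = fun y => φ y * G k y :=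
    fun k => funext fun y => by rw [hF, div_eq_inv_mul]
  obtain ⟨c, hφ⟩ : ∃ c, HasFDerivAt φ (c • innerSL ℝ x) x :=
    ⟨_, ((hasDerivAt_pow D ‖x‖).inv (pow_ne_zero D (norm_ne_zero_iff.2 hx))).hasFDerivAt_comp_norm
      hx⟩
  have hG : ∀ k, DifferentiableAt ℝ (G k) x := by fun_prop
  have hGk : ∀ k, fderiv ℝ (G k) x (EuclideanSpace.single k 1) = 0 := fun k =>
    fderiv_apply_eq_zero_of_forall_add_smul_eq (hG k) fun t => by simp [G, hσ]
  have hFd : DifferentiableAt ℝ F x :=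
    differentiableAt_euclidean.2 fun k => hFG k ▸ hφ.differentiableAt.mul (hG k)
  refine ⟨hFd, ?_⟩
  calc ∑ k, ⟪fderiv ℝ F x (EuclideanSpace.single k 1), EuclideanSpace.single k 1⟫
      = ∑ k, fderiv ℝ (fun y => φ y * G k y) x (EuclideanSpace.single k 1) := by
        simp [EuclideanSpace.inner_single_right, ← fderiv_euclidean_apply hFd, hFG]
    _ = c * ∑ k, a k * x k * ∏ m, x (σ m k) := by
        rw [Finset.mul_sum]
        refine Finset.sum_congr rfl fun k _ => ?_
        rw [fderiv_fun_mul hφ.differentiableAt (hG k)]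
        simp only [add_apply, smul_apply, hφ.fderiv, hGk, coe_innerSL_apply, smul_eq_mul,
          EuclideanSpace.inner_single_right, conj_trivial, one_mul, mul_zero, zero_add, G]
        ring
    _ = 0 := by rw [ha, mul_zero]
end

section
/- Let D ≥ 1 be a natural number and let f : ℝ^D → ℝ be continuously differentiable with compact support. Then ∫_{ℝ^D} ⟪x / ‖x‖^D, ∇f(x)⟫ dx = −A_{D−1} · f(0), where A_{D−1} = 2 π^{D/2} / Γ(D/2) is the surface area of the unit (D−1)-sphere. (This is the rigorous, distributional form of the identity δ^D(x) = ∑_{k=1}^{D} ∂/∂x_k ( x_k / (A_{D−1} ‖x‖^D) ).) -/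
/-!
In polar coordinates `x = r • y` (`r > 0`, `‖y‖ = 1`) the density `r ^ (D - 1)` of Lebesgue
measure cancels the singularity of `x / ‖x‖ ^ D`, and the integrand becomes the radial derivative
`d/dr f (r • y)`. By the fundamental theorem of calculus every ray contributes `-f 0`, so the
integral is `-f 0` times the area `D · vol(B(0, 1)) = 2 π ^ (D / 2) / Γ(D / 2)` of the unit sphere.
Fubini applies because the integrand is `O(‖x‖ ^ (1 - D))` near `0` and compactly supported.
-/

open scoped RealInnerProductSpace
open MeasureTheory Real Set Metric Module

section PolarCoordinates

variable {E F : Type*} [NormedAddCommGroup E] [NormedSpace ℝ E] [NormedAddCommGroup F]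
  [NormedSpace ℝ F]

theorem MeasureTheory.integral_volumeIoiPow (n : ℕ) (φ : ℝ → F) :
    ∫ r, φ r ∂Measure.volumeIoiPow n = ∫ r in Ioi (0 : ℝ), r ^ n • φ r := by
  simp only [Measure.volumeIoiPow, ENNReal.ofReal]
  rw [integral_withDensity_eq_integral_smul (measurable_subtype_coe.pow_const _).real_toNNReal,
    integral_subtype_comap measurableSet_Ioi fun r ↦ (r ^ n).toNNReal • φ r]
  refine setIntegral_congr_fun measurableSet_Ioi fun r hr ↦ ?_
  rw [NNReal.smul_def, Real.coe_toNNReal _ (pow_nonneg (le_of_lt hr) _)]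

theorem MeasureTheory.integral_eq_integral_toSphere_integral_Ioi [FiniteDimensional ℝ E]
    [MeasurableSpace E] [BorelSpace E] [Nontrivial E] (μ : Measure E) [μ.IsAddHaarMeasure]
    {g : E → F} (hg : Integrable g μ) :
    ∫ x, g x ∂μ =
      ∫ y, (∫ r in Ioi (0 : ℝ), r ^ (finrank ℝ E - 1) • g (r • (y : E))) ∂μ.toSphere := by
  set T := homeomorphUnitSphereProd E
  have hT := μ.measurePreserving_homeomorphUnitSphereProd
  have hgT : ∀ x : ({0}ᶜ : Set E), g x = g ((T x).2.1 • (T x).1.1) := fun x ↦ by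
    simp [T, smul_inv_smul₀ (norm_ne_zero_iff.2 x.2)]
  calc ∫ x, g x ∂μ = ∫ x : ({0}ᶜ : Set E), g x ∂μ.comap (↑) := by
        rw [integral_subtype_comap (measurableSet_singleton _).compl, restrict_compl_singleton]
    _ = ∫ p, g (p.2.1 • p.1.1) ∂μ.toSphere.prod (.volumeIoiPow (finrank ℝ E - 1)) := by
        simp_rw [hgT]
        exact hT.integral_comp T.measurableEmbedding (fun p ↦ g (p.2.1 • p.1.1))
    _ = _ := by
        rw [integral_prod _ ((hT.integrable_comp_emb T.measurableEmbedding).1 ?_)]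
        · exact integral_congr_ae (.of_forall fun y ↦ integral_volumeIoiPow _ fun r ↦ g (r • y.1))
        convert (integrableOn_iff_comap_subtypeVal (measurableSet_singleton 0).compl).1
          hg.integrableOn using 1
        exact funext fun x ↦ (hgT x).symm

theorem integral_Ioi_fderiv_smul_apply [CompleteSpace F] {f : E → F} (hf : ContDiff ℝ 1 f)
    (hsupp : HasCompactSupport f) {y : E} (hy : y ≠ 0) :
    ∫ r in Ioi (0 : ℝ), fderiv ℝ f (r • y) y = -f 0 := by
  have hline : ContDiff ℝ 1 fun r : ℝ ↦ r • y := contDiff_id.smul contDiff_const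
  have hderiv : ∀ r : ℝ, deriv (fun r : ℝ ↦ f (r • y)) r = fderiv ℝ f (r • y) y := fun r ↦ by
    have := ((hf.differentiable one_ne_zero) (r • y)).hasFDerivAt.comp_hasDerivAt r
      ((hasDerivAt_id r).smul_const y)
    simpa [Function.comp_def] using this.deriv
  have := HasCompactSupport.integral_Ioi_deriv_eq (hf.comp hline)
    (hsupp.comp_isClosedEmbedding (isClosedEmbedding_smul_left hy)) 0
  simpa only [Function.comp_def, hderiv, zero_smul] using this

end PolarCoordinates

section RadialField

variable {E : Type*} [NormedAddCommGroup E] [InnerProductSpace ℝ E]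

theorem pow_pred_mul_inner_inv_norm_pow_smul_gradient [CompleteSpace E] {n : ℕ} (hn : n ≠ 0)
    (f : E → ℝ) {y : E} (hy : ‖y‖ = 1) {r : ℝ} (hr : 0 < r) :
    r ^ (n - 1) * ⟪(‖r • y‖ ^ n)⁻¹ • (r • y), gradient f (r • y)⟫ = fderiv ℝ f (r • y) y := by
  rw [norm_smul, hy, mul_one, norm_of_nonneg hr.le, smul_smul, real_inner_smul_left,
    inner_gradient_right, conj_trivial, ← mul_assoc, ← mul_assoc, ← pow_sub_one_mul hn]
  field_simp

theorem norm_inner_inv_norm_pow_smul_le (n : ℕ) (x v : E) :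
    ‖⟪(‖x‖ ^ n)⁻¹ • x, v⟫‖ ≤ ‖v‖ * ‖x‖ ^ (-((n : ℝ) - 1)) := by
  rcases eq_or_ne x 0 with rfl | hx
  · simp only [smul_zero, inner_zero_left, norm_zero]
    positivity
  calc ‖⟪(‖x‖ ^ n)⁻¹ • x, v⟫‖ ≤ ‖(‖x‖ ^ n)⁻¹ • x‖ * ‖v‖ := norm_inner_le_norm _ _
    _ = ‖v‖ * ‖x‖ ^ (-((n : ℝ) - 1)) := by
      rw [norm_smul, norm_inv, norm_pow, norm_norm, neg_sub, rpow_sub (norm_pos_iff.2 hx),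
        rpow_one, rpow_natCast]
      ring

variable [FiniteDimensional ℝ E] [MeasurableSpace E] [BorelSpace E] [Nontrivial E]

theorem integrable_inner_inv_norm_pow_smul_gradient (μ : Measure E) [μ.IsAddHaarMeasure]
    {f : E → ℝ} (hf : ContDiff ℝ 1 f) (hsupp : HasCompactSupport f) :
    Integrable (fun x ↦ ⟪(‖x‖ ^ finrank ℝ E)⁻¹ • x, gradient f x⟫) μ := by
  have hgrad : Continuous (gradient f) :=
    (InnerProductSpace.toDual ℝ E).symm.continuous.comp (hf.continuous_fderiv one_ne_zero)
  have hgrad_supp : HasCompactSupport (gradient f) := (hsupp.fderiv ℝ).comp_left (map_zero _)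
  obtain ⟨C, hC⟩ := hgrad.norm.bounded_above_of_compact_support hgrad_supp.norm
  have hloc : LocallyIntegrable (fun x ↦ ⟪(‖x‖ ^ finrank ℝ E)⁻¹ • x, gradient f x⟫) μ := by
    refine locallyIntegrable_of_norm_le_rpow finrank_pos (C := C) (sub_one_lt _)
      (.of_forall fun x ↦ ?_) ?_
    · refine (norm_inner_inv_norm_pow_smul_le _ x _).trans ?_
      gcongr
      simpa using hC x
    · exact (((measurable_norm.pow_const _).inv.smul measurable_id).inner
        hgrad.measurable).aestronglyMeasurable
  have hsupp' : HasCompactSupport (fun x ↦ ⟪(‖x‖ ^ finrank ℝ E)⁻¹ • x, gradient f x⟫) :=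
    hgrad_supp.mono fun x hx h0 ↦ hx (by simp only [h0, inner_zero_right])
  exact (integrableOn_iff_integrable_of_support_subset (subset_tsupport _)).1
    (hloc.integrableOn_isCompact hsupp')

theorem integral_inner_inv_norm_pow_smul_gradient (μ : Measure E) [μ.IsAddHaarMeasure]
    {f : E → ℝ} (hf : ContDiff ℝ 1 f) (hsupp : HasCompactSupport f) :
    ∫ x, ⟪(‖x‖ ^ finrank ℝ E)⁻¹ • x, gradient f x⟫ ∂μ = -μ.toSphere.real univ * f 0 := by
  have hray : ∀ y : sphere (0 : E) 1, ∫ r in Ioi (0 : ℝ),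
      r ^ (finrank ℝ E - 1) • ⟪(‖r • (y : E)‖ ^ finrank ℝ E)⁻¹ • (r • (y : E)),
        gradient f (r • (y : E))⟫ = -f 0 := fun y ↦ by
    rw [← integral_Ioi_fderiv_smul_apply hf hsupp (ne_zero_of_mem_unit_sphere y)]
    exact setIntegral_congr_fun measurableSet_Ioi fun r hr ↦
      pow_pred_mul_inner_inv_norm_pow_smul_gradient finrank_pos.ne' f (norm_eq_of_mem_sphere y) hr
  rw [integral_eq_integral_toSphere_integral_Ioi μ
    (integrable_inner_inv_norm_pow_smul_gradient μ hf hsupp)]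
  simp_rw [hray, integral_const, smul_eq_mul, neg_mul, mul_neg]

theorem InnerProductSpace.toSphere_real_apply_univ :
    (volume : Measure E).toSphere.real univ =
      2 * π ^ ((finrank ℝ E : ℝ) / 2) / Gamma ((finrank ℝ E : ℝ) / 2) := by
  have hsqrt : √π ^ finrank ℝ E = π ^ ((finrank ℝ E : ℝ) / 2) := by
    rw [sqrt_eq_rpow, ← rpow_natCast, ← rpow_mul pi_pos.le, one_div_mul_eq_div]
  have hn : (0 : ℝ) < finrank ℝ E := Nat.cast_pos.2 finrank_pos
  rw [Measure.toSphere_real_apply_univ, measureReal_def, InnerProductSpace.volume_ball,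
    ENNReal.ofReal_one, one_pow, one_mul, ENNReal.toReal_ofReal (by positivity), hsqrt,
    Gamma_add_one (by positivity)]
  field_simp

end RadialField

/-- Distributional form of `δ^D(x) = ∑_k ∂/∂x_k (x_k / (A_{D-1} ‖x‖^D))`:
for every `C¹` compactly supported `f : ℝ^D → ℝ`,
`∫ ⟪x/‖x‖^D, ∇f(x)⟫ dx = −A_{D−1} · f(0)` with `A_{D−1} = 2π^{D/2}/Γ(D/2)`. -/
theorem radial_field_is_dirac_delta
    (D : ℕ) (hD : 1 ≤ D)
    (f : EuclideanSpace ℝ (Fin D) → ℝ)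
    (hf : ContDiff ℝ 1 f) (hsupp : HasCompactSupport f) :
    ∫ x : EuclideanSpace ℝ (Fin D),
        ⟪(‖x‖ ^ D)⁻¹ • x, gradient f x⟫
      = -(2 * π ^ ((D : ℝ) / 2) / Real.Gamma ((D : ℝ) / 2)) * f 0 := by
  have : Nonempty (Fin D) := ⟨⟨0, hD⟩⟩
  have h := integral_inner_inv_norm_pow_smul_gradient volume hf hsupp
  rwa [InnerProductSpace.toSphere_real_apply_univ, finrank_euclideanSpace_fin] at h
end

section
/- Let s ∈ ℂ and let H : ℝ × ℝ → ℂ be a continuously differentiable map satisfying H(u, t + 1) = H(u, t) for all u, t (so each H(u, ·) is a loop), and H(u, t) ≠ s for all u, t. Then ∫_0^1 (∂H/∂t)(0, t) / (H(0, t) − s) dt = ∫_0^1 (∂H/∂t)(1, t) / (H(1, t) − s) dt. (Loops that are smoothly homotopic in ℂ \ {s} have equal χ-invariants; the D = 2, N = 2 case of the invariance theorem.) -/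
/-!
The integral `∫₀¹ ∂ₜH(u, t) / (H(u, t) - s) dt` is a continuous function of `u`. Since
`t ↦ (H(u, t) - s) · exp (-∫₀ᵗ ∂ₜH / (H - s))` has zero derivative, its exponential is
`(H(u, 1) - s) / (H(u, 0) - s) = 1`; so it is a continuous lift of the constant `1` through the
covering map `exp : ℂ → ℂ \ {0}`, hence constant on the connected line.
-/

open Complex

theorem hasDerivAt_apply_prodMk_left {E : Type*} [NormedAddCommGroup E] [NormedSpace ℝ E]
    {H : ℝ × ℝ → E} {u t : ℝ} (hH : DifferentiableAt ℝ H (u, t)) :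
    HasDerivAt (fun τ => H (u, τ)) (fderiv ℝ H (u, t) (0, 1)) t :=
  hH.hasFDerivAt.comp_hasDerivAt t ((hasDerivAt_const t u).prodMk (hasDerivAt_id t))

theorem cexp_integral_div_eq_div {γ γ' : ℝ → ℂ} (hγ : ∀ t, HasDerivAt γ (γ' t) t)
    (hγ' : Continuous γ') (hγ0 : ∀ t, γ t ≠ 0) (a b : ℝ) :
    cexp (∫ t in a..b, γ' t / γ t) = γ b / γ a := by
  have hf : Continuous fun t => γ' t / γ t :=
    hγ'.div (continuous_iff_continuousAt.2 fun t => (hγ t).continuousAt) hγ0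
  set G : ℝ → ℂ := fun x => ∫ t in a..x, γ' t / γ t
  have hF : ∀ x, HasDerivAt (fun x => γ x * cexp (-G x)) 0 x := by
    intro x
    have hG : HasDerivAt G (γ' x / γ x) x := (hf.integral_hasStrictDerivAt a x).hasDerivAt
    refine ((hγ x).mul hG.neg.cexp).congr_deriv ?_
    field_simp [hγ0 x]
    ring
  have hconst : γ b * cexp (-G b) = γ a * cexp (-G a) :=
    is_const_of_deriv_eq_zero (fun x => (hF x).differentiableAt) (fun x => (hF x).deriv) b a
  simp only [G, intervalIntegral.integral_same, neg_zero, Complex.exp_zero, mul_one,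
    Complex.exp_neg] at hconst
  rw [eq_div_iff (hγ0 a), ← hconst]
  field_simp

theorem Continuous.const_of_cexp_eq_one {X : Type*} [TopologicalSpace X] [PreconnectedSpace X]
    {φ : X → ℂ} (hφ : Continuous φ) (h : ∀ x, cexp (φ x) = 1) (x y : X) : φ x = φ y :=
  Complex.isCoveringMap_exp.const_of_comp hφ (fun x y => Subtype.ext (by simp only [h])) x y

/-- Loops that are smoothly homotopic in `ℂ \ {s}` have equal χ-invariants:
the `D = 2, N = 2` case of the invariance theorem. -/
theorem chi_invariant_homotopy_invariance_complex
    (s : ℂ) (H : ℝ × ℝ → ℂ) (hH : ContDiff ℝ 1 H)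
    (hper : ∀ u t : ℝ, H (u, t + 1) = H (u, t))
    (hs : ∀ u t : ℝ, H (u, t) ≠ s) :
    ∫ t in (0 : ℝ)..1, deriv (fun τ => H (0, τ)) t / (H (0, t) - s)
      = ∫ t in (0 : ℝ)..1, deriv (fun τ => H (1, τ)) t / (H (1, t) - s) := by
  set D : ℝ × ℝ → ℂ := fun p => fderiv ℝ H p (0, 1)
  have hD : Continuous D := (hH.continuous_fderiv one_ne_zero).clm_apply continuous_const
  have hder : ∀ u t, HasDerivAt (fun τ => H (u, τ)) (D (u, t)) t := fun u t =>
    hasDerivAt_apply_prodMk_left (hH.differentiable one_ne_zero _)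
  have hsub : ∀ u t, H (u, t) - s ≠ 0 := fun u t => sub_ne_zero.2 (hs u t)
  set φ : ℝ → ℂ := fun u => ∫ t in (0 : ℝ)..1, D (u, t) / (H (u, t) - s)
  have hφ : Continuous φ :=
    intervalIntegral.continuous_parametric_intervalIntegral_of_continuous'
      (hD.div (hH.continuous.sub continuous_const) fun p => hsub p.1 p.2) 0 1
  have hexp : ∀ u, cexp (φ u) = 1 := fun u => by
    rw [cexp_integral_div_eq_div (fun t => (hder u t).sub_const s)
      (hD.comp (Continuous.prodMk_right u)) (hsub u),
      div_eq_one_iff_eq (hsub u 0), ← zero_add (1 : ℝ), hper]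
  have hderiv : ∀ u, deriv (fun τ => H (u, τ)) = fun t => D (u, t) := fun u =>
    funext fun t => (hder u t).deriv
  simpa only [hderiv] using hφ.const_of_cexp_eq_one hexp 0 1
end

section
/- Let η : ℝ → ℝ³ be a continuously differentiable loop (η(t+1) = η(t)) and define B(x) = (1/(4π)) ∫_0^1 η′(t) × (x − η(t)) / ‖x − η(t)‖³ dt. Then for every x not in the image of η, B is differentiable at x and its Jacobian is symmetric: ⟪ (fderiv ℝ B x) u, v ⟫ = ⟪ (fderiv ℝ B x) v, u ⟫ for all u, v ∈ ℝ³. (The curl of the Biot–Savart field vanishes away from the source curve, i.e. the 1-form ψ_S = B · dl is closed on ℝ³ \ S.) -/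
open scoped Real RealInnerProductSpace

/-- The standard cross product on `ℝ³ = EuclideanSpace ℝ (Fin 3)`. -/
noncomputable def cross3 (a b : EuclideanSpace ℝ (Fin 3)) : EuclideanSpace ℝ (Fin 3) :=
  (WithLp.equiv 2 (Fin 3 → ℝ)).symm
    ![a 1 * b 2 - a 2 * b 1, a 2 * b 0 - a 0 * b 2, a 0 * b 1 - a 1 * b 0]

/-!
With `K r = ‖r‖⁻³ • r`, the field is `B = (4π)⁻¹ ∫ η' × K(· - η)`. Near a point `x` off the
compact curve the integrand is `C¹` in `x` with derivative bounded uniformly in `t`, so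
`DB(x) = (4π)⁻¹ ∫ η'(t) × DK(x - η t) dt`. Because `DK` is trace-free, the antisymmetric part
`⟪η' × DK(x - η) u, v⟫ - ⟪η' × DK(x - η) v, u⟫` of the integrand is the `t`-derivative of
`⟪K(x - η t) × u, v⟫`, which takes the same value at both ends of a period.
-/

open Set Metric

theorem hasFDerivAt_intervalIntegral_of_continuousOn
    {H E : Type*} [NormedAddCommGroup H] [NormedSpace ℝ H] [ProperSpace H]
    [NormedAddCommGroup E] [NormedSpace ℝ E]
    {f : H → ℝ → E} {f' : H → ℝ → H →L[ℝ] E} {x : H} {ε a b : ℝ} (hε : 0 < ε)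
    (hf : ContinuousOn (Function.uncurry f) (closedBall x ε ×ˢ uIcc a b))
    (hf' : ContinuousOn (Function.uncurry f') (closedBall x ε ×ˢ uIcc a b))
    (hdiff : ∀ y ∈ ball x ε, ∀ t ∈ uIcc a b, HasFDerivAt (f · t) (f' y t) y) :
    HasFDerivAt (fun y => ∫ t in a..b, f y t) (∫ t in a..b, f' x t) x := by
  obtain ⟨C, hC⟩ :=
    ((isCompact_closedBall x ε).prod isCompact_uIcc).exists_bound_of_continuousOn hf'
  have hx : x ∈ closedBall x ε := mem_closedBall_self hε.le
  refine intervalIntegral.hasFDerivAt_integral_of_dominated_of_fderiv_le (bound := fun _ => C)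
    (ball_mem_nhds x hε) ?_ (hf.uncurry_left x hx).intervalIntegrable
    (((hf'.uncurry_left x hx).mono uIoc_subset_uIcc).aestronglyMeasurable measurableSet_uIoc)
    ?_ intervalIntegrable_const ?_
  · filter_upwards [ball_mem_nhds x hε] with y hy
    exact ((hf.uncurry_left y (ball_subset_closedBall hy)).mono uIoc_subset_uIcc
      ).aestronglyMeasurable measurableSet_uIoc
  · exact .of_forall fun t ht y hy => hC (y, t) ⟨ball_subset_closedBall hy, uIoc_subset_uIcc ht⟩
  · exact .of_forall fun t ht y hy => hdiff y hy t (uIoc_subset_uIcc ht)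

section InverseSquareField

variable {E : Type*} [NormedAddCommGroup E] [InnerProductSpace ℝ E]

noncomputable def inverseSquareField (r : E) : E := (‖r‖ ^ 3)⁻¹ • r

theorem contDiffAt_inverseSquareField {r : E} (hr : r ≠ 0) :
    ContDiffAt ℝ 1 inverseSquareField r :=
  (((contDiffAt_norm ℝ hr).pow 3).inv (pow_ne_zero 3 (norm_ne_zero_iff.mpr hr))).smul
    contDiffAt_id

theorem continuousOn_inverseSquareField : ContinuousOn (inverseSquareField (E := E)) {0}ᶜ :=
  fun _ hr => (contDiffAt_inverseSquareField hr).continuousAt.continuousWithinAt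

theorem continuousOn_fderiv_inverseSquareField :
    ContinuousOn (fderiv ℝ (inverseSquareField (E := E))) {0}ᶜ :=
  ContDiffOn.continuousOn_fderiv_of_isOpen
    (fun _ hr => (contDiffAt_inverseSquareField hr).contDiffWithinAt) isOpen_compl_singleton
    le_rfl

theorem fderiv_inverseSquareField_apply {r : E} (hr : r ≠ 0) (u : E) :
    fderiv ℝ inverseSquareField r u = (‖r‖ ^ 3)⁻¹ • u - (3 * (‖r‖ ^ 5)⁻¹ * ⟪r, u⟫) • r := by
  have hn : 0 < ‖r‖ := norm_pos_iff.mpr hr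
  have hK : (inverseSquareField : E → E) =
      ((fun s : ℝ => s⁻¹) ∘ fun y : E => ‖y‖ ^ (3 : ℝ)) • id := by
    ext y; simp [inverseSquareField]
  have h := ((hasDerivAt_inv (by positivity : ‖r‖ ^ (3 : ℝ) ≠ 0)).comp_hasFDerivAt r
    (hasFDerivAt_norm_rpow r (p := 3) (by norm_num))).smul (hasFDerivAt_id r)
  have h3 : ‖r‖ ^ (3 : ℝ) = ‖r‖ ^ 3 := by norm_cast
  rw [hK, h.fderiv]
  norm_num [h3, sub_eq_add_neg]
  congr 1
  field_simp

end InverseSquareField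

local notation "E₃" => EuclideanSpace ℝ (Fin 3)

noncomputable def crossL : E₃ →L[ℝ] E₃ →L[ℝ] E₃ :=
  let e := WithLp.linearEquiv 2 ℝ (Fin 3 → ℝ)
  LinearMap.toContinuousLinearMap <| LinearMap.toContinuousLinearMap.toLinearMap ∘ₗ
    ((crossProduct.compl₁₂ e.toLinearMap e.toLinearMap).compr₂ e.symm.toLinearMap)

@[simp] theorem crossL_apply (a b : E₃) : crossL a b = cross3 a b := rfl

/-- This holds because `fderiv ℝ inverseSquareField r` is trace-free (`‖r‖⁻¹` is harmonic): for
every linear `M`, `det (M a, u, v) + det (a, M u, v) + det (a, u, M v) = tr M * det (a, u, v)`. -/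
theorem inner_cross_fderiv_inverseSquareField_sub {r : E₃} (hr : r ≠ 0) (a u v : E₃) :
    ⟪cross3 a (fderiv ℝ inverseSquareField r u), v⟫ -
        ⟪cross3 a (fderiv ℝ inverseSquareField r v), u⟫ =
      ⟪cross3 (fderiv ℝ inverseSquareField r (-a)) u, v⟫ := by
  have hr2 : ‖r‖ ^ 2 = r 0 ^ 2 + r 1 ^ 2 + r 2 ^ 2 := by
    simp [EuclideanSpace.norm_sq_eq, Fin.sum_univ_three]
  have hr3 : (‖r‖ ^ 3)⁻¹ = (‖r‖ ^ 5)⁻¹ * (r 0 ^ 2 + r 1 ^ 2 + r 2 ^ 2) := by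
    rw [← hr2]; field_simp
  simp only [fderiv_inverseSquareField_apply hr, PiLp.inner_apply, RCLike.inner_apply,
    conj_trivial, cross3, Fin.sum_univ_three, PiLp.sub_apply, PiLp.smul_apply, PiLp.neg_apply,
    smul_eq_mul, WithLp.equiv_symm_apply, Matrix.cons_val_zero, Matrix.cons_val_one,
    Matrix.cons_val_two, Matrix.head_cons, Matrix.tail_cons]
  rw [hr3]
  ring

noncomputable def biotSavartIntegral (γ j : ℝ → E₃) (a b : ℝ) (y : E₃) : E₃ :=
  ∫ t in a..b, crossL (j t) (inverseSquareField (y - γ t))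

noncomputable def biotSavartIntegralDeriv (γ j : ℝ → E₃) (a b : ℝ) (x : E₃) : E₃ →L[ℝ] E₃ :=
  ∫ t in a..b, crossL (j t) ∘L fderiv ℝ inverseSquareField (x - γ t)

theorem hasFDerivAt_biotSavartIntegral {γ j : ℝ → E₃} (hγ : Continuous γ) (hj : Continuous j)
    {a b : ℝ} {x : E₃} (hx : x ∉ γ '' uIcc a b) :
    HasFDerivAt (biotSavartIntegral γ j a b) (biotSavartIntegralDeriv γ j a b x) x := by
  obtain ⟨ε, hε, hball⟩ : ∃ ε > 0, closedBall x ε ⊆ (γ '' uIcc a b)ᶜ :=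
    nhds_basis_closedBall.mem_iff.mp
      ((isCompact_uIcc.image hγ).isClosed.isOpen_compl.mem_nhds hx)
  have hne : ∀ p ∈ closedBall x ε ×ˢ uIcc a b, p.1 - γ p.2 ∈ ({0}ᶜ : Set E₃) :=
    fun p hp h => hball hp.1 ⟨p.2, hp.2, (sub_eq_zero.mp h).symm⟩
  have hr : ContinuousOn (fun p : E₃ × ℝ => p.1 - γ p.2) (closedBall x ε ×ˢ uIcc a b) := by
    fun_prop
  have hJ : Continuous fun p : E₃ × ℝ => crossL (j p.2) := by fun_prop
  refine hasFDerivAt_intervalIntegral_of_continuousOn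
    (f := fun y t => crossL (j t) (inverseSquareField (y - γ t)))
    (f' := fun y t => crossL (j t) ∘L fderiv ℝ inverseSquareField (y - γ t)) hε
    (hJ.continuousOn.clm_apply (continuousOn_inverseSquareField.comp hr hne))
    (hJ.continuousOn.clm_comp (continuousOn_fderiv_inverseSquareField.comp hr hne))
    fun y hy t ht => ?_
  have hK := (contDiffAt_inverseSquareField (hne (y, t) ⟨ball_subset_closedBall hy, ht⟩)
    ).differentiableAt one_ne_zero
  simpa only [Function.comp_def, id_eq, ContinuousLinearMap.comp_id] using
    (crossL (j t)).hasFDerivAt.comp y (hK.hasFDerivAt.comp y ((hasFDerivAt_id y).sub_const (γ t)))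

theorem inner_biotSavartIntegralDeriv_comm {η : ℝ → E₃} (hη : ContDiff ℝ 1 η) {a b : ℝ}
    (hab : η a = η b) {x : E₃} (hx : x ∉ η '' uIcc a b) (u v : E₃) :
    ⟪biotSavartIntegralDeriv η (deriv η) a b x u, v⟫ =
      ⟪biotSavartIntegralDeriv η (deriv η) a b x v, u⟫ := by
  have hr : ∀ t ∈ uIcc a b, x - η t ∈ ({0}ᶜ : Set E₃) :=
    fun t ht h => hx ⟨t, ht, (sub_eq_zero.mp h).symm⟩
  set L := fun t => crossL (deriv η t) ∘L fderiv ℝ inverseSquareField (x - η t)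
  have hL : ContinuousOn L (uIcc a b) :=
    (crossL.continuous.comp (hη.continuous_deriv le_rfl)).continuousOn.clm_comp
      (continuousOn_fderiv_inverseSquareField.comp
        (continuous_const.sub hη.continuous).continuousOn hr)
  let Φ : (E₃ →L[ℝ] E₃) →L[ℝ] ℝ :=
    (innerSL ℝ v).comp (.apply ℝ E₃ u) - (innerSL ℝ u).comp (.apply ℝ E₃ v)
  have hΦ (M : E₃ →L[ℝ] E₃) : Φ M = ⟪M u, v⟫ - ⟪M v, u⟫ := by
    simp [Φ, real_inner_comm]
  let ψ t := ⟪v, cross3 (inverseSquareField (x - η t)) u⟫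
  have hψ : ∀ t ∈ uIcc a b, HasDerivAt ψ (Φ (L t)) t := by
    intro t ht
    have hK := ((contDiffAt_inverseSquareField (hr t ht)).differentiableAt one_ne_zero).hasFDerivAt
    have h := ((innerSL ℝ v ∘L crossL.flip u).hasFDerivAt.comp_hasDerivAt t
      (hK.comp_hasDerivAt t ((hη.differentiable one_ne_zero t).hasDerivAt.const_sub x)))
    have hval : (innerSL ℝ v ∘L crossL.flip u)
        (fderiv ℝ inverseSquareField (x - η t) (-deriv η t)) = Φ (L t) := by
      simp only [ContinuousLinearMap.comp_apply, ContinuousLinearMap.flip_apply,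
        innerSL_apply_apply, crossL_apply, hΦ, L]
      rw [inner_cross_fderiv_inverseSquareField_sub (hr t ht), real_inner_comm]
    rw [← hval]
    exact h
  rw [← sub_eq_zero, ← hΦ, biotSavartIntegralDeriv,
    ← Φ.intervalIntegral_comp_comm (hL.intervalIntegrable),
    intervalIntegral.integral_eq_sub_of_hasDerivAt hψ
      ((Φ.continuous.comp_continuousOn hL).intervalIntegrable)]
  simp [ψ, hab]

/-- Away from the source loop `η`, the Biot–Savart field `B` is differentiable and its
Jacobian is symmetric (i.e. `curl B = 0`, so the 1-form `ψ_S = B · dl` is closed on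
`ℝ³ \ S`). -/
theorem biot_savart_field_is_curl_free
    (η : ℝ → EuclideanSpace ℝ (Fin 3)) (hη : ContDiff ℝ 1 η)
    (hηper : ∀ t : ℝ, η (t + 1) = η t)
    (B : EuclideanSpace ℝ (Fin 3) → EuclideanSpace ℝ (Fin 3))
    (hB : ∀ x : EuclideanSpace ℝ (Fin 3),
      B x = (1 / (4 * π)) •
        ∫ t in (0 : ℝ)..1, (‖x - η t‖ ^ 3)⁻¹ • cross3 (deriv η t) (x - η t)) :
    ∀ x : EuclideanSpace ℝ (Fin 3), (∀ t : ℝ, x ≠ η t) →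
      DifferentiableAt ℝ B x ∧
        ∀ u v : EuclideanSpace ℝ (Fin 3),
          ⟪(fderiv ℝ B x) u, v⟫ = ⟪(fderiv ℝ B x) v, u⟫ := by
  intro x hx
  have hxη : x ∉ η '' uIcc 0 1 := by
    rintro ⟨t, -, rfl⟩
    exact hx t rfl
  have hB' : B = (1 / (4 * π)) • biotSavartIntegral η (deriv η) 0 1 := by
    funext y
    simp [hB, biotSavartIntegral, inverseSquareField]
  have hD : HasFDerivAt B ((1 / (4 * π)) • biotSavartIntegralDeriv η (deriv η) 0 1 x) x := by
    rw [hB']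
    exact (hasFDerivAt_biotSavartIntegral hη.continuous (hη.continuous_deriv le_rfl) hxη
      ).const_smul _
  refine ⟨hD.differentiableAt, fun u v => ?_⟩
  simp only [hD.fderiv, FunLike.coe_smul, Pi.smul_apply, real_inner_smul_left,
    inner_biotSavartIntegralDeriv_comm hη (by simpa using (hηper 0).symm) hxη u v]
end
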